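/- Let k > 0, let C be the counterexample-b function, and let (p₁, …, pₙ) be a probability vector with all pᵢ > 0 and Σᵢ pᵢ ln pᵢ ≠ 0. Then there is no real number L such that the function (α, β) ↦ Σᵢ (pᵢ^α − pᵢ^β)/C(α, β) tends to L as (α, β) tends to (1, 1) within the set {(α, β) | α ≠ β}. -/

import Mathlib

open Filter Real

/-- The counterexample-b function from the paper. -/
noncomputable def Cb (k : ℝ) : ℝ × ℝ → ℝ := fun q =>
  if q = (1, 1) then 0
  else ((q.1 - q.2) / (2 * k)) *
    ((q.1 - 1) * (q.2 - 1) / ((q.1 - 1) ^ 2 + (q.2 - 1) ^ 2) - 1)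

/-!
Along the line `t ↦ (1 + a t, 1 + b t)` with `a ≠ b`, `Cb k` is exactly linear in `t`, with a slope
`(a - b) / (2k) · (ab / (a² + b²) - 1)` that depends on the direction, while the numerator is
`(a - b) t ∑ pᵢ log pᵢ + o(t)`. So the quotient tends to `2k ∑ pᵢ log pᵢ / (ab / (a² + b²) - 1)`,
which is `-2k ∑ pᵢ log pᵢ` for the direction `(1, 0)` but `-10k/3 · ∑ pᵢ log pᵢ` for `(1, 2)`.
-/

open Topology

theorem HasDerivAt.tendsto_slope_zero_const_mul {f : ℝ → ℝ} {f' x : ℝ} (hf : HasDerivAt f f' x)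
    (c : ℝ) : Tendsto (fun t ↦ (f (x + c * t) - f x) / t) (𝓝[≠] 0) (𝓝 (c * f')) := by
  have hline : HasDerivAt (fun t : ℝ ↦ x + c * t) c 0 := by
    simpa using ((hasDerivAt_id (0 : ℝ)).const_mul c).const_add x
  have := (hf.comp_of_eq 0 hline (by simp)).tendsto_slope_zero
  simpa [div_eq_inv_mul, mul_comm c] using this

theorem HasDerivAt.tendsto_sub_div_along_lines {f : ℝ → ℝ} {f' x : ℝ} (hf : HasDerivAt f f' x)
    (a b : ℝ) :
    Tendsto (fun t ↦ (f (x + a * t) - f (x + b * t)) / t) (𝓝[≠] 0) (𝓝 ((a - b) * f')) := by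
  rw [sub_mul]
  refine ((hf.tendsto_slope_zero_const_mul a).sub (hf.tendsto_slope_zero_const_mul b)).congr
    fun t ↦ ?_
  ring

theorem tendsto_line_nhdsWithin_offDiag {a b : ℝ} (hab : a ≠ b) (x : ℝ) :
    Tendsto (fun t : ℝ ↦ (x + a * t, x + b * t)) (𝓝[≠] 0) (𝓝[{q | q.1 ≠ q.2}] (x, x)) := by
  refine tendsto_nhdsWithin_of_tendsto_nhds_of_eventually_within _ ?_ ?_
  · have : Continuous fun t : ℝ ↦ (x + a * t, x + b * t) := by fun_prop
    simpa using (this.tendsto 0).mono_left nhdsWithin_le_nhds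
  · filter_upwards [self_mem_nhdsWithin] with t (ht : t ≠ 0)
    simpa [mul_left_inj' ht] using hab

theorem Cb_one_add_mul {k a b t : ℝ} (hab : a ≠ b) (ht : t ≠ 0) :
    Cb k (1 + a * t, 1 + b * t) = t * ((a - b) / (2 * k) * (a * b / (a ^ 2 + b ^ 2) - 1)) := by
  have hne : (1 + a * t, 1 + b * t) ≠ ((1 : ℝ), (1 : ℝ)) := by
    simp only [ne_eq, Prod.mk.injEq, add_eq_left, mul_eq_zero, ht, or_false, not_and]
    rintro rfl rfl
    exact hab rfl
  rw [Cb, if_neg hne]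
  simp only [add_sub_cancel_left]
  field_simp
  ring

theorem mul_div_sq_add_sq_sub_one_ne_zero {a b : ℝ} (hab : a ≠ b) :
    a * b / (a ^ 2 + b ^ 2) - 1 ≠ 0 := by
  have hpos : 0 < (a - b) ^ 2 := by positivity [sub_ne_zero.2 hab]
  exact sub_ne_zero.2 (div_lt_one (by nlinarith) |>.2 (by nlinarith)).ne

theorem tendsto_sum_rpow_sub_div_Cb {ι : Type*} [Fintype ι] {p : ι → ℝ} (hp : ∀ i, 0 < p i)
    {k a b : ℝ} (hk : k ≠ 0) (hab : a ≠ b) :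
    Tendsto (fun t ↦ ∑ i, (p i ^ (1 + a * t) - p i ^ (1 + b * t)) / Cb k (1 + a * t, 1 + b * t))
      (𝓝[≠] 0) (𝓝 (2 * k * (∑ i, p i * log (p i)) / (a * b / (a ^ 2 + b ^ 2) - 1))) := by
  set c := (a - b) / (2 * k) * (a * b / (a ^ 2 + b ^ 2) - 1) with hc_def
  have hc : c ≠ 0 :=
    mul_ne_zero (div_ne_zero (sub_ne_zero.2 hab) (by positivity))
      (mul_div_sq_add_sq_sub_one_ne_zero hab)
  have hquot : Tendsto (fun t ↦ ∑ i, (p i ^ (1 + a * t) - p i ^ (1 + b * t)) / t) (𝓝[≠] 0)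
      (𝓝 ((a - b) * ∑ i, p i * log (p i))) := by
    rw [Finset.mul_sum]
    refine tendsto_finsetSum _ fun i _ ↦ ?_
    simpa using ((hasStrictDerivAt_const_rpow (hp i) 1).hasDerivAt).tendsto_sub_div_along_lines a b
  have hlim : (a - b) * (∑ i, p i * log (p i)) / c =
      2 * k * (∑ i, p i * log (p i)) / (a * b / (a ^ 2 + b ^ 2) - 1) := by
    rw [hc_def]
    field_simp
  rw [← hlim]
  refine (hquot.div_const c).congr' ?_
  filter_upwards [self_mem_nhdsWithin] with t (ht : t ≠ 0)
  simp only [Cb_one_add_mul hab ht, ← hc_def, Finset.sum_div, div_div, mul_comm t]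

theorem stmt11_general (k : ℝ) (hk : 0 < k) (n : ℕ) (p : Fin n → ℝ)
    (hp : ∀ i, 0 < p i)
    (hlog : ∑ i, p i * Real.log (p i) ≠ 0) :
    ¬ ∃ L : ℝ, Filter.Tendsto (fun q : ℝ × ℝ => ∑ i, (p i ^ q.1 - p i ^ q.2) / Cb k q)
      (nhdsWithin ((1 : ℝ), (1 : ℝ)) {q : ℝ × ℝ | q.1 ≠ q.2}) (nhds L) := by
  rintro ⟨L, hL⟩
  have hlim {a b : ℝ} (hab : a ≠ b) :
      L = 2 * k * (∑ i, p i * log (p i)) / (a * b / (a ^ 2 + b ^ 2) - 1) :=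
    tendsto_nhds_unique (hL.comp (tendsto_line_nhdsWithin_offDiag hab 1))
      (tendsto_sum_rpow_sub_div_Cb hp hk.ne' hab)
  have h₁ := hlim (a := 1) (b := 0) one_ne_zero
  have h₂ := hlim (a := 1) (b := 2) (by norm_num)
  norm_num at h₁ h₂
  exact mul_ne_zero hk.ne' hlog (by linarith)

theorem stmt11 (k : ℝ) (hk : 0 < k) (n : ℕ) (p : Fin n → ℝ)
    (hp : ∀ i, 0 < p i) (hsum : ∑ i, p i = 1)
    (hlog : ∑ i, p i * Real.log (p i) ≠ 0) :
    ¬ ∃ L : ℝ, Filter.Tendsto (fun q : ℝ × ℝ => ∑ i, (p i ^ q.1 - p i ^ q.2) / Cb k q)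
      (nhdsWithin ((1 : ℝ), (1 : ℝ)) {q : ℝ × ℝ | q.1 ≠ q.2}) (nhds L) :=
  stmt11_general k hk n p hp hlog
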